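/- In the chord-space model, the left and right boundary operators commute: H_{L,i} ∘ H_{R,j} = H_{R,j} ∘ H_{L,i} for all i, j ∈ {0,1}, where H_{R,i} = a_{R,i} + a†_{R,i} and H_{L,i} = a_{L,i} + a†_{L,i}. -/

import Mathlib

namespace DSSYK

/-- Binary strings (chord words); the letter `0` is `false`, the letter `1` is `true`. -/
abbrev Str : Type := List Bool

/-- The chord space: finitely supported complex functions on binary strings. -/
abbrev Sp : Type := Str →₀ ℂ

/-- Crossing weights: `Q 0 0 = q`, `Q 1 1 = q_m`, mixed crossings give `r`. -/
def Qmat (q qm r : ℝ) : Bool → Bool → ℂ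
  | false, false => (q : ℂ)
  | true,  true  => (qm : ℂ)
  | _,     _     => (r : ℂ)

/-- Right creation `a†_{R,i}`: append the letter `i` on the right. -/
noncomputable def creR (i : Bool) : Sp →ₗ[ℂ] Sp :=
  Finsupp.lift Sp ℂ Str fun w => Finsupp.single (w ++ [i]) 1

/-- Value of the right annihilation operator on a basis string: delete one letter
equal to `i`, weighted by the crossing factors with all letters to its right. -/
noncomputable def annVecR (Q : Bool → Bool → ℂ) (i : Bool) : Str → Sp
  | [] => 0
  | x :: t =>
      (if x = i then ((t.map (Q i)).prod) • Finsupp.single t (1 : ℂ) else 0)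
        + Finsupp.mapDomain (List.cons x) (annVecR Q i t)

/-- Right annihilation `a_{R,i}`. -/
noncomputable def annR (Q : Bool → Bool → ℂ) (i : Bool) : Sp →ₗ[ℂ] Sp :=
  Finsupp.lift Sp ℂ Str (annVecR Q i)

/-- Left creation `a†_{L,i}`: prepend the letter `i`. -/
noncomputable def creL (i : Bool) : Sp →ₗ[ℂ] Sp :=
  Finsupp.lift Sp ℂ Str fun w => Finsupp.single (i :: w) 1

/-- Value of the left annihilation operator on a basis string: delete one letter
equal to `i`, weighted by the crossing factors with all letters to its left. -/
noncomputable def annVecL (Q : Bool → Bool → ℂ) (i : Bool) : Str → Sp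
  | [] => 0
  | x :: t =>
      (if x = i then Finsupp.single t (1 : ℂ) else 0)
        + Q i x • Finsupp.mapDomain (List.cons x) (annVecL Q i t)

/-- Left annihilation `a_{L,i}`. -/
noncomputable def annL (Q : Bool → Bool → ℂ) (i : Bool) : Sp →ₗ[ℂ] Sp :=
  Finsupp.lift Sp ℂ Str (annVecL Q i)

/-- Diagonal weight operator `δ_w ↦ c₀^{N₀(w)} · c₁^{N₁(w)} · δ_w`, where `N₀, N₁`
count the `0`'s and `1`'s in `w`. -/
noncomputable def Wgen (c₀ c₁ : ℂ) : Sp →ₗ[ℂ] Sp :=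
  Finsupp.lift Sp ℂ Str fun w =>
    Finsupp.single w (c₀ ^ (w.count false) * c₁ ^ (w.count true))

/-- The chord-counting weight operator `W δ_w = q^{N₀(w)} r^{N₁(w)} δ_w`. -/
noncomputable def Wop (q r : ℝ) : Sp →ₗ[ℂ] Sp := Wgen (q : ℂ) (r : ℂ)

/-- Right boundary operators `H_{R,i} = a_{R,i} + a†_{R,i}`. -/
noncomputable def HR (Q : Bool → Bool → ℂ) (i : Bool) : Sp →ₗ[ℂ] Sp := annR Q i + creR i

/-- Left boundary operators `H_{L,i} = a_{L,i} + a†_{L,i}`. -/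
noncomputable def HL (Q : Bool → Bool → ℂ) (i : Bool) : Sp →ₗ[ℂ] Sp := annL Q i + creL i

/-- The vacuum `ω = δ_{[]}` (the empty string). -/
noncomputable def vac : Sp := Finsupp.single [] 1

/-- `ε v = v([])`, the coefficient of the empty string. -/
def eps (v : Sp) : ℂ := v []

end DSSYK

/-!
Expanding both products, creations at opposite ends commute, and the two cross commutators
`[a_{L,i}, a†_{R,j}]` and `[a_{R,j}, a†_{L,i}]` both equal `δ_{ij} W_i`, where
`W_i δ_w = (∏_s Q(i, w_s)) δ_w`, so they cancel. The annihilators commute because deleting a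
letter `i` on the left rescales `W_j` by `Q(j,i)`, which by the symmetry of `Q` is the crossing
factor `Q(i,j)` that the right annihilator picks up when it passes the deleted letter.
Every identity is checked on basis words by induction, peeling letters off with `a†_L`.
-/

theorem List.prod_map_bool {M : Type*} [CommMonoid M] (f : Bool → M) (l : List Bool) :
    (l.map f).prod = f false ^ l.count false * f true ^ l.count true := by
  induction l with
  | nil => simp
  | cons x l ih => cases x <;> simp [ih, pow_succ] <;> ac_rfl

namespace DSSYK

open Finsupp

theorem linearMap_ext_single {f g : Sp →ₗ[ℂ] Sp}
    (h : ∀ w, f (single w 1) = g (single w 1)) : f = g :=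
  Finsupp.basisSingleOne.ext fun w => by simpa using h w

theorem creL_single (i : Bool) (w : Str) (c : ℂ) : creL i (single w c) = single (i :: w) c := by
  simp [creL]

theorem creR_single (j : Bool) (w : Str) (c : ℂ) : creR j (single w c) = single (w ++ [j]) c := by
  simp [creR]

theorem creL_eq_lmapDomain (i : Bool) : creL i = lmapDomain ℂ ℂ (List.cons i) :=
  linearMap_ext_single fun w => by simp [creL_single]

theorem creL_creR (i j : Bool) (v : Sp) : creL i (creR j v) = creR j (creL i v) :=
  LinearMap.congr_fun (linearMap_ext_single (f := creL i ∘ₗ creR j) (g := creR j ∘ₗ creL i)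
    fun w => by simp [creL_single, creR_single]) v

theorem Wgen_single (c₀ c₁ : ℂ) (w : Str) :
    Wgen c₀ c₁ (single w 1) = (c₀ ^ w.count false * c₁ ^ w.count true) • single w 1 := by
  simp [Wgen]

theorem Wgen_creL (f : Bool → ℂ) (x : Bool) (v : Sp) :
    Wgen (f false) (f true) (creL x v) = f x • creL x (Wgen (f false) (f true) v) :=
  LinearMap.congr_fun (linearMap_ext_single (f := Wgen (f false) (f true) ∘ₗ creL x)
    (g := f x • (creL x ∘ₗ Wgen (f false) (f true))) fun w => by
      simp only [LinearMap.comp_apply, LinearMap.smul_apply, creL_single, Wgen_single, map_smul,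
        smul_smul]
      congr 1
      cases x <;> simp [pow_succ] <;> ring) v

section

variable (Q : Bool → Bool → ℂ)

theorem annL_single (i : Bool) (w : Str) : annL Q i (single w 1) = annVecL Q i w := by
  simp [annL]

theorem annR_single (j : Bool) (w : Str) : annR Q j (single w 1) = annVecR Q j w := by
  simp [annR]

theorem annL_creL (i x : Bool) (v : Sp) :
    annL Q i (creL x v) = (if x = i then v else 0) + Q i x • creL x (annL Q i v) := by
  have h : annL Q i ∘ₗ creL x
      = (if x = i then LinearMap.id else 0) + Q i x • (creL x ∘ₗ annL Q i) :=
    linearMap_ext_single fun w => by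
      split_ifs <;> simp [annL_single, annVecL, creL_eq_lmapDomain, *]
  simpa [DFunLike.ite_apply] using LinearMap.congr_fun h v

theorem annL_creR (i j : Bool) (v : Sp) :
    annL Q i (creR j v)
      = creR j (annL Q i v) + if j = i then Wgen (Q i false) (Q i true) v else 0 := by
  have h : annL Q i ∘ₗ creR j
      = creR j ∘ₗ annL Q i + if j = i then Wgen (Q i false) (Q i true) else 0 := by
    refine linearMap_ext_single fun w => ?_
    simp only [LinearMap.comp_apply, LinearMap.add_apply, DFunLike.ite_apply,
      LinearMap.zero_apply]
    induction w with
    | nil => simp [creR_single, annL_single, annVecL, Wgen_single]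
    | cons x t ih =>
      rw [← creL_single, ← creL_creR, annL_creL, annL_creL, ih, Wgen_creL]
      split_ifs <;> simp only [map_add, map_smul, creL_creR, smul_add, add_zero, zero_add]
      abel
  simpa [DFunLike.ite_apply] using LinearMap.congr_fun h v

theorem annR_creL (j x : Bool) (v : Sp) :
    annR Q j (creL x v)
      = (if x = j then Wgen (Q j false) (Q j true) v else 0) + creL x (annR Q j v) := by
  have h : annR Q j ∘ₗ creL x
      = (if x = j then Wgen (Q j false) (Q j true) else 0) + creL x ∘ₗ annR Q j :=
    linearMap_ext_single fun w => by
      split_ifs <;> simp [annR_single, annVecR, Wgen_single, List.prod_map_bool,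
        creL_eq_lmapDomain, *]
  simpa [DFunLike.ite_apply] using LinearMap.congr_fun h v

theorem annL_Wgen (i : Bool) (f : Bool → ℂ) (v : Sp) :
    annL Q i (Wgen (f false) (f true) v) = f i • Wgen (f false) (f true) (annL Q i v) := by
  have h : annL Q i ∘ₗ Wgen (f false) (f true)
      = f i • (Wgen (f false) (f true) ∘ₗ annL Q i) := by
    refine linearMap_ext_single fun w => ?_
    simp only [LinearMap.comp_apply, LinearMap.smul_apply]
    induction w with
    | nil => simp [Wgen_single, annL_single, annVecL]
    | cons x t ih =>
      rw [← creL_single, Wgen_creL, map_smul, annL_creL, annL_creL, ih]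
      split_ifs with hx
      · simp only [hx, map_add, map_smul, Wgen_creL]
      · simp only [map_add, map_smul, map_zero, Wgen_creL]
        module
  exact LinearMap.congr_fun h v

theorem annL_annR (i j : Bool) (hQ : Q i j = Q j i) (v : Sp) :
    annL Q i (annR Q j v) = annR Q j (annL Q i v) := by
  have h : annL Q i ∘ₗ annR Q j = annR Q j ∘ₗ annL Q i := by
    refine linearMap_ext_single fun w => ?_
    simp only [LinearMap.comp_apply]
    induction w with
    | nil => simp [annR_single, annL_single, annVecL, annVecR]
    | cons x t ih =>
      rw [← creL_single]
      obtain rfl | hxj := eq_or_ne x j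
      · simp only [annR_creL, annL_creL, if_true, map_add, map_smul, annL_Wgen, ih, ← hQ]
        split_ifs <;> simp only [smul_add, map_zero, zero_add]
        abel
      · simp only [annR_creL, annL_creL, hxj, if_false, zero_add, map_add, map_smul, ih]
        split_ifs <;> simp
  exact LinearMap.congr_fun h v

theorem HL_HR_comm (i j : Bool) (hQ : Q i j = Q j i) (v : Sp) :
    HL Q i (HR Q j v) = HR Q j (HL Q i v) := by
  simp only [HL, HR, LinearMap.add_apply, map_add, annL_annR Q i j hQ, annL_creR, annR_creL,
    creL_creR]
  obtain rfl | hij := eq_or_ne i j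
  · simp only [if_true]
    abel
  · simp only [hij, hij.symm, if_false]
    abel

end

theorem Qmat_comm (q qm r : ℝ) (i j : Bool) : Qmat q qm r i j = Qmat q qm r j i := by
  cases i <;> cases j <;> rfl

end DSSYK

open DSSYK in
/-- the left and right boundary Hamiltonians commute:
`H_{L,i} ∘ H_{R,j} = H_{R,j} ∘ H_{L,i}` for all `i, j ∈ {0,1}`. -/
theorem stmt_6 (q qm r : ℝ) (i j : Bool) :
    HL (Qmat q qm r) i ∘ₗ HR (Qmat q qm r) j
      = HR (Qmat q qm r) j ∘ₗ HL (Qmat q qm r) i :=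
  LinearMap.ext fun v => HL_HR_comm _ i j (Qmat_comm q qm r i j) v
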